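/- Let m ≥ 1 and n = 2m+1. Define γ_i := (1/2)(A_{m+1}(i−1) − A_{m+1}(i) + A_m(i−1) − A_m(i)) for i = 1,…,n, let T be the n×n symmetric Toeplitz matrix with entries T[i,j] = γ_{n−|i−j|}, and let u ∈ ℝ^n be the vector with u_j = ξ_{min(j, n+1−j) − 1}, i.e. u = (ξ_0, ξ_1, …, ξ_{m−1}, ξ_m, ξ_{m−1}, …, ξ_1, ξ_0). Then each γ_i ≥ 0, T u = u, and the spectral norm (largest singular value) of T equals 1. -/

import Mathlib

/-- `ξ i = C(2i, i) / 4^i`. -/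
noncomputable def xi (i : ℕ) : ℝ := (Nat.choose (2 * i) i : ℝ) / 4 ^ i

/-- `A_m(j) = ∑_{i=0}^{m−j−1} ξ_i ξ_{i+j}` (which is `0` when `j ≥ m`). -/
noncomputable def Am (m j : ℕ) : ℝ := ∑ i ∈ Finset.range (m - j), xi i * xi (i + j)

/-- `toeplitz n γ` is the `n×n` symmetric Toeplitz matrix `Toeplitz(γ_n, …, γ_1)` whose
`(i,j)` entry (for `1 ≤ i, j ≤ n`) is `γ_{n − |i−j|}`. -/
def toeplitz (n : ℕ) (γ : ℕ → ℝ) : Matrix (Fin n) (Fin n) ℝ :=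
  Matrix.of fun i j => γ (n - (max (i : ℕ) (j : ℕ) - min (i : ℕ) (j : ℕ)))

/-- The spectral norm (largest singular value) of a real matrix, as the operator norm
of its action on Euclidean space. -/
noncomputable def sNorm {n : ℕ} (M : Matrix (Fin n) (Fin n) ℝ) : ℝ :=
  ‖Matrix.toEuclideanCLM (𝕜 := ℝ) M‖

/-!
The palindromic vector `u` is a positive fixed point of `T`. Because `A_M(j)` is a sum of
products `ξ_t ξ_{t+j}`, regrouping `∑_k ξ_k A_M(c + k)` along antidiagonals and using the
convolution identity `∑_{k ≤ s} ξ_k ξ_{s-k} = 1` (the square of `(1 - 4x)^{-1/2}` is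
`(1 - 4x)^{-1}`) gives `∑_k ξ_k A_M(c + k) = ξ_c + ⋯ + ξ_{M-1}`; this telescopes in each row of
`T u`, since `γ_s` vanishes for `s ≥ m + 2`. The entries `γ_i` are nonnegative because `A_M` is
decreasing. For a symmetric nonnegative matrix with a positive fixed vector, the Schur test
(Cauchy–Schwarz weighted by `u`) gives `‖T‖ ≤ 1`, and `T u = u` gives `‖T‖ ≥ 1`.
-/
open Finset
open scoped Matrix

lemma xi_zero : xi 0 = 1 := by simp [xi]

lemma xi_pos (i : ℕ) : 0 < xi i :=
  div_pos (Nat.cast_pos.2 (Nat.choose_pos (by omega))) (by positivity)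

lemma two_mul_succ_mul_xi_succ (k : ℕ) : 2 * (k + 1) * xi (k + 1) = (2 * k + 1) * xi k := by
  have h : ((k + 1) * Nat.centralBinom (k + 1) : ℝ) = 2 * (2 * k + 1) * Nat.centralBinom k := by
    exact_mod_cast Nat.succ_mul_centralBinom_succ k
  simp only [xi, ← Nat.centralBinom_eq_two_mul_choose, pow_succ]
  rw [mul_div_assoc', mul_div_assoc', div_eq_div_iff (by positivity) (by positivity)]
  linear_combination 2 * 4 ^ k * h

lemma xi_antitone : Antitone xi := by
  refine antitone_nat_of_succ_le fun k => ?_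
  nlinarith [two_mul_succ_mul_xi_succ k, xi_pos k, xi_pos (k + 1)]

lemma sum_antidiagonal_two_mul_fst_mul_xi (n : ℕ) :
    ∑ p ∈ antidiagonal n, 2 * (p.1 : ℝ) * (xi p.1 * xi p.2) =
      n * ∑ p ∈ antidiagonal n, xi p.1 * xi p.2 := by
  have hswap : ∑ p ∈ antidiagonal n, (p.2 : ℝ) * (xi p.1 * xi p.2) =
      ∑ p ∈ antidiagonal n, (p.1 : ℝ) * (xi p.1 * xi p.2) := by
    refine (Nat.sum_antidiagonal_swap.symm).trans (sum_congr rfl fun p _ => ?_)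
    simp only [Prod.fst_swap, Prod.snd_swap, mul_comm (xi p.2)]
  calc ∑ p ∈ antidiagonal n, 2 * (p.1 : ℝ) * (xi p.1 * xi p.2)
      = ∑ p ∈ antidiagonal n, (p.1 : ℝ) * (xi p.1 * xi p.2) +
          ∑ p ∈ antidiagonal n, (p.2 : ℝ) * (xi p.1 * xi p.2) := by
        rw [hswap, ← sum_add_distrib]
        exact sum_congr rfl fun p _ => by ring
    _ = ∑ p ∈ antidiagonal n, ((p.1 + p.2 : ℕ) : ℝ) * (xi p.1 * xi p.2) := by
        rw [← sum_add_distrib]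
        exact sum_congr rfl fun p _ => by push_cast; ring
    _ = n * ∑ p ∈ antidiagonal n, xi p.1 * xi p.2 := by
        rw [mul_sum]
        exact sum_congr rfl fun p hp => by rw [mem_antidiagonal.1 hp]

lemma sum_antidiagonal_xi_mul_xi (n : ℕ) : ∑ p ∈ antidiagonal n, xi p.1 * xi p.2 = 1 := by
  induction n with
  | zero => simp [xi_zero]
  | succ n ih =>
    -- weighting by `2k` and shifting `k ↦ k + 1` with `2(k+1) ξ_{k+1} = (2k+1) ξ_k`
    -- gives `(n + 1) c_{n+1} = n c_n + c_n`
    have h := sum_antidiagonal_two_mul_fst_mul_xi (n + 1)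
    rw [Nat.sum_antidiagonal_succ] at h
    have hstep : ∑ p ∈ antidiagonal n, 2 * ((p.1 + 1 : ℕ) : ℝ) * (xi (p.1 + 1) * xi p.2) =
        ∑ p ∈ antidiagonal n, 2 * (p.1 : ℝ) * (xi p.1 * xi p.2) +
          ∑ p ∈ antidiagonal n, xi p.1 * xi p.2 := by
      rw [← sum_add_distrib]
      refine sum_congr rfl fun p _ => ?_
      push_cast
      linear_combination xi p.2 * two_mul_succ_mul_xi_succ p.1
    rw [hstep, sum_antidiagonal_two_mul_fst_mul_xi, ih] at h
    push_cast at h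
    refine mul_left_cancel₀ (Nat.cast_add_one_ne_zero n) ?_
    linarith

lemma sum_range_xi_mul_xi_sub (n : ℕ) : ∑ k ∈ range (n + 1), xi k * xi (n - k) = 1 := by
  rw [← Nat.sum_antidiagonal_eq_sum_range_succ (fun a b => xi a * xi b), sum_antidiagonal_xi_mul_xi]

lemma Am_eq_zero {M j : ℕ} (h : M ≤ j) : Am M j = 0 := by
  simp [Am, Nat.sub_eq_zero_of_le h]

lemma Am_antitone (M : ℕ) : Antitone (Am M) := by
  refine antitone_nat_of_succ_le fun j => ?_
  calc Am M (j + 1) ≤ ∑ i ∈ range (M - (j + 1)), xi i * xi (i + j) :=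
        sum_le_sum fun i _ => mul_le_mul_of_nonneg_left (xi_antitone (by omega)) (xi_pos i).le
    _ ≤ Am M j :=
        sum_le_sum_of_subset_of_nonneg (range_subset_range.2 (by omega))
          fun i _ _ => mul_nonneg (xi_pos i).le (xi_pos _).le

lemma sum_xi_mul_Am {M c N : ℕ} (h : M ≤ c + N) :
    ∑ k ∈ range N, xi k * Am M (c + k) = ∑ s ∈ Ico c M, xi s := by
  have htail : ∑ k ∈ Ico (M - c) N, xi k * Am M (c + k) = 0 :=
    sum_eq_zero fun k hk => by rw [Am_eq_zero (by simp at hk; omega), mul_zero]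
  rw [← sum_range_add_sum_Ico _ (show M - c ≤ N by omega), htail, add_zero, sum_Ico_eq_sum_range]
  calc ∑ k ∈ range (M - c), xi k * Am M (c + k)
      = ∑ k ∈ range (M - c), ∑ t ∈ range (M - c - k), xi k * xi t * xi (c + (k + t)) := by
        refine sum_congr rfl fun k _ => ?_
        rw [Am, mul_sum, show M - (c + k) = M - c - k by omega]
        exact sum_congr rfl fun t _ => by rw [mul_assoc, add_comm t, add_assoc]
    _ = ∑ s ∈ range (M - c), ∑ k ∈ range (s + 1), xi k * xi (s - k) * xi (c + (k + (s - k))) :=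
        (sum_range_diag_flip _ fun k t => xi k * xi t * xi (c + (k + t))).symm
    _ = ∑ s ∈ range (M - c), xi (c + s) := by
        refine sum_congr rfl fun s _ => ?_
        rw [← one_mul (xi (c + s)), ← sum_range_xi_mul_xi_sub s, sum_mul]
        exact sum_congr rfl fun k hk => by rw [Nat.add_sub_cancel' (by simp at hk; omega)]

lemma sum_xi_mul_sub_Am {M c N : ℕ} (h : M ≤ c + N) :
    ∑ k ∈ range N, xi k * (Am M (c + k) - Am M (c + k + 1)) = if c < M then xi c else 0 := by
  simp_rw [mul_sub, sum_sub_distrib, add_right_comm c _ 1]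
  rw [sum_xi_mul_Am h, sum_xi_mul_Am (by omega)]
  split_ifs with hc
  · rw [sum_eq_sum_Ico_succ_bot hc, add_sub_cancel_right]
  · rw [Ico_eq_empty_of_le (by omega), Ico_eq_empty_of_le (by omega), sub_self]

noncomputable def gam (m i : ℕ) : ℝ :=
  (1 / 2) * (Am (m + 1) (i - 1) - Am (m + 1) i + Am m (i - 1) - Am m i)

lemma gam_succ (m j : ℕ) :
    gam m (j + 1) = ((Am (m + 1) j - Am (m + 1) (j + 1)) + (Am m j - Am m (j + 1))) / 2 := by
  rw [gam, Nat.add_sub_cancel]; ring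

lemma gam_nonneg (m : ℕ) {i : ℕ} (hi : 1 ≤ i) : 0 ≤ gam m i := by
  obtain ⟨j, rfl⟩ := Nat.exists_eq_add_of_le' hi
  rw [gam_succ]
  linarith [Am_antitone (m + 1) j.le_succ, Am_antitone m j.le_succ]

lemma gam_eq_zero {m s : ℕ} (h : m + 2 ≤ s) : gam m s = 0 := by
  obtain ⟨j, rfl⟩ := Nat.exists_eq_add_of_le' (by omega : 1 ≤ s)
  rw [gam_succ, Am_eq_zero (by omega : m + 1 ≤ j), Am_eq_zero (by omega : m ≤ j),
    Am_eq_zero (by omega : m + 1 ≤ j + 1), Am_eq_zero (by omega : m ≤ j + 1)]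
  ring

lemma sum_xi_mul_gam {m i : ℕ} (hi : i ≤ m) :
    ∑ k ∈ range (m + 1 - i), xi k * gam m (i + k + 1) = if i < m then xi i else xi i / 2 := by
  simp_rw [gam_succ, mul_div_assoc', ← sum_div, mul_add, sum_add_distrib]
  rw [sum_xi_mul_sub_Am (by omega), sum_xi_mul_sub_Am (by omega), if_pos (by omega)]
  split_ifs <;> ring

lemma gam_self_succ (m : ℕ) : gam m (m + 1) = xi m / 2 := by
  simpa [xi_zero] using sum_xi_mul_gam (le_refl m)

lemma sum_gam_mul_xi {m i : ℕ} (hm : 1 ≤ m) (hi : i ≤ m) :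
    ∑ j ∈ range (2 * m + 1), gam m (2 * m + 1 - (max i j - min i j)) * xi (min j (2 * m - j)) =
      xi i := by
  rw [← sum_range_reflect, ← sum_range_add_sum_Ico _ (show m + 1 - i ≤ 2 * m + 1 by omega),
    Nat.add_sub_cancel]
  -- in the column `2m - k`, `γ` sits at index `i + k + 1`, which exceeds `m + 1` once
  -- `k > m - i`; the only other nonzero entry is the corner `γ_{m+1}` of the middle row
  have hhead : ∀ k ∈ range (m + 1 - i),
      gam m (2 * m + 1 - (max i (2 * m - k) - min i (2 * m - k))) *
        xi (min (2 * m - k) (2 * m - (2 * m - k))) = xi k * gam m (i + k + 1) := by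
    intro k hk
    rw [mem_range] at hk
    rw [mul_comm, show min (2 * m - k) (2 * m - (2 * m - k)) = k by omega,
      show 2 * m + 1 - (max i (2 * m - k) - min i (2 * m - k)) = i + k + 1 by omega]
  have hvanish : ∀ k ∈ Ico (m + 1 - i) (2 * m + 1), (i = m → k ≠ 2 * m) →
      gam m (2 * m + 1 - (max i (2 * m - k) - min i (2 * m - k))) = 0 := by
    intro k hk hkm
    rw [mem_Ico] at hk
    exact gam_eq_zero (by omega)
  rw [sum_congr rfl hhead, sum_xi_mul_gam hi]
  split_ifs with him
  · rw [sum_eq_zero fun k hk => by rw [hvanish k hk (by omega), zero_mul], add_zero]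
  · obtain rfl : i = m := by omega
    rw [sum_eq_single_of_mem (2 * i) (by simp; omega)
        fun k hk hk' => by rw [hvanish k hk fun _ => hk', zero_mul],
      show 2 * i + 1 - (max i (2 * i - 2 * i) - min i (2 * i - 2 * i)) = i + 1 by
        omega, show min (2 * i - 2 * i) (2 * i - (2 * i - 2 * i)) = 0 by omega,
      gam_self_succ, xi_zero]
    ring

lemma toeplitz_isSymm (n : ℕ) (γ : ℕ → ℝ) : (toeplitz n γ).IsSymm := by
  ext i j
  simp only [Matrix.transpose_apply, toeplitz, Matrix.of_apply, max_comm, min_comm]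

lemma toeplitz_rev_rev (n : ℕ) (γ : ℕ → ℝ) (i j : Fin n) :
    toeplitz n γ i.rev j.rev = toeplitz n γ i j := by
  simp only [toeplitz, Matrix.of_apply, Fin.val_rev]
  congr 2
  omega

lemma mulVec_rev {R : Type*} [NonUnitalNonAssocSemiring R] {n : ℕ} {T : Matrix (Fin n) (Fin n) R}
    {u : Fin n → R} (hT : ∀ i j, T i.rev j.rev = T i j) (hu : ∀ j, u j.rev = u j) (i : Fin n) :
    (T *ᵥ u) i.rev = (T *ᵥ u) i :=
  (Fintype.sum_equiv Fin.revPerm (fun j => T i j * u j) (fun j => T i.rev j * u j)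
    fun j => by simp [hT, hu]).symm

lemma toeplitz_gam_mulVec {m : ℕ} (hm : 1 ≤ m) :
    toeplitz (2 * m + 1) (gam m) *ᵥ (fun j : Fin (2 * m + 1) => xi (min (j : ℕ) (2 * m - j))) =
      fun j : Fin (2 * m + 1) => xi (min (j : ℕ) (2 * m - j)) := by
  ext i
  wlog hi : (i : ℕ) ≤ m generalizing i
  · rw [← Fin.rev_rev i, mulVec_rev (toeplitz_rev_rev _ _) (fun j => ?_), this _ (by simp; omega)]
    · simp only [Fin.val_rev]; congr 1; omega
    · simp only [Fin.val_rev]; congr 1; omega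
  rw [Matrix.mulVec, dotProduct, min_eq_left (by omega)]
  exact (Fin.sum_univ_eq_sum_range (fun j => gam m (2 * m + 1 - (max (i : ℕ) j - min (i : ℕ) j)) *
    xi (min j (2 * m - j))) _).trans (sum_gam_mul_xi hm hi)

section SchurTest

variable {ι : Type*} [Fintype ι] {T : Matrix ι ι ℝ} {u : ι → ℝ}

lemma sq_mulVec_le_of_mulVec_eq (hT : ∀ i j, 0 ≤ T i j) (hu : ∀ i, 0 < u i) (hTu : T *ᵥ u = u)
    (y : ι → ℝ) (i : ι) : (T *ᵥ y) i ^ 2 ≤ u i * ∑ j, T i j * (y j ^ 2 / u j) := by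
  have hrow : ∑ j, T i j * u j = u i := congrFun hTu i
  rw [← hrow, show (T *ᵥ y) i = ∑ j, T i j * y j from rfl]
  -- Cauchy–Schwarz for `T_ij y_j = √(T_ij u_j) · √(T_ij y_j² / u_j)`
  refine sum_sq_le_sum_mul_sum_of_sq_le_mul _ (fun j _ => mul_nonneg (hT i j) (hu j).le)
    (fun j _ => mul_nonneg (hT i j) (div_nonneg (sq_nonneg _) (hu j).le)) fun j _ => ?_
  rw [mul_mul_mul_comm, mul_div_cancel₀ _ (hu j).ne']
  exact le_of_eq (by ring)

lemma sum_sq_mulVec_le_of_mulVec_eq (hTs : T.IsSymm) (hT : ∀ i j, 0 ≤ T i j)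
    (hu : ∀ i, 0 < u i) (hTu : T *ᵥ u = u) (y : ι → ℝ) :
    ∑ i, (T *ᵥ y) i ^ 2 ≤ ∑ i, y i ^ 2 :=
  calc ∑ i, (T *ᵥ y) i ^ 2 ≤ ∑ i, u i * ∑ j, T i j * (y j ^ 2 / u j) :=
        sum_le_sum fun i _ => sq_mulVec_le_of_mulVec_eq hT hu hTu y i
    _ = ∑ j, (∑ i, T j i * u i) * (y j ^ 2 / u j) := by
        simp_rw [mul_sum, sum_mul]
        rw [sum_comm]
        exact sum_congr rfl fun j _ => sum_congr rfl fun i _ => by rw [hTs.apply i j]; ring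
    _ = ∑ j, y j ^ 2 := sum_congr rfl fun j _ => by
        rw [show ∑ i, T j i * u i = u j from congrFun hTu j, mul_div_cancel₀ _ (hu j).ne']

lemma norm_toEuclideanCLM_le_one_of_mulVec_eq [DecidableEq ι] (hTs : T.IsSymm)
    (hT : ∀ i j, 0 ≤ T i j) (hu : ∀ i, 0 < u i) (hTu : T *ᵥ u = u) :
    ‖Matrix.toEuclideanCLM (𝕜 := ℝ) T‖ ≤ 1 := by
  refine ContinuousLinearMap.opNorm_le_bound _ zero_le_one fun x => ?_
  rw [one_mul, ← sq_le_sq₀ (norm_nonneg _) (norm_nonneg _), EuclideanSpace.real_norm_sq_eq,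
    EuclideanSpace.real_norm_sq_eq]
  exact sum_sq_mulVec_le_of_mulVec_eq hTs hT hu hTu _

lemma one_le_norm_toEuclideanCLM_of_mulVec_eq [DecidableEq ι] (hu : u ≠ 0) (hTu : T *ᵥ u = u) :
    1 ≤ ‖Matrix.toEuclideanCLM (𝕜 := ℝ) T‖ := by
  have hv : 0 < ‖WithLp.toLp 2 u‖ := norm_pos_iff.2 (by simpa using hu)
  have h := (Matrix.toEuclideanCLM (𝕜 := ℝ) T).le_opNorm (WithLp.toLp 2 u)
  rw [Matrix.toEuclideanCLM_toLp, hTu] at h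
  exact le_of_mul_le_mul_right (by simpa using h) hv

end SchurTest

/-- Let `m ≥ 1`, `n = 2m+1`, and `γ_i = (1/2)(A_{m+1}(i−1) − A_{m+1}(i) + A_m(i−1) − A_m(i))`
for `i = 1, …, n`; let `T = Toeplitz(γ_n, …, γ_1)` and let
`u = (ξ_0, ξ_1, …, ξ_{m−1}, ξ_m, ξ_{m−1}, …, ξ_1, ξ_0)`, i.e. `u_j = ξ_{min(j, n+1−j) − 1}`
for `1 ≤ j ≤ n`.  Then each `γ_i ≥ 0`, `T u = u`, and the spectral norm of `T` equals `1`. -/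
theorem odd_toeplitz (m : ℕ) (hm : 1 ≤ m) :
    let n := 2 * m + 1
    let γ : ℕ → ℝ := fun i =>
      (1 / 2) * (Am (m + 1) (i - 1) - Am (m + 1) i + Am m (i - 1) - Am m i)
    let T := toeplitz n γ
    let u : Fin n → ℝ := fun j => xi (min (j : ℕ) (n - 1 - (j : ℕ)))
    (∀ i, 1 ≤ i → i ≤ n → 0 ≤ γ i) ∧ T.mulVec u = u ∧ sNorm T = 1 := by
  intro n γ T u
  have hTu : T *ᵥ u = u := toeplitz_gam_mulVec hm
  have hu : ∀ j, 0 < u j := fun j => xi_pos _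
  have hT : ∀ i j, 0 ≤ T i j := fun i j => gam_nonneg m (by omega)
  refine ⟨fun i hi _ => gam_nonneg m hi, hTu, le_antisymm ?_ ?_⟩
  · exact norm_toEuclideanCLM_le_one_of_mulVec_eq (toeplitz_isSymm n γ) hT hu hTu
  · exact one_le_norm_toEuclideanCLM_of_mulVec_eq (fun h => (hu 0).ne' (congrFun h 0)) hTu
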